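/- arXiv:2509.10679 — 2 statements merged into one kernel-verified Lean document; each statement's English description precedes it below -/
import Mathlib

section
/- Let G = (V,E) be a finite simple graph with ν(G) < |V|/2. Then there exists a graph G' on the same vertex set V such that G is a subgraph of G', ν(G') = ν(G), and G' is CAD-complete with the C-part of its Gallai–Edmonds decomposition empty (i.e., G' is AD-complete). -/
namespace GRT

variable {V : Type*}

/-- The matching number of a graph: the maximum size of a matching. -/
noncomputable def matchingNumber (G : SimpleGraph V) : ℕ :=
  sSup {n | ∃ M : G.Subgraph, M.IsMatching ∧ M.edgeSet.ncard = n}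

/-- `M` is a maximum matching of `G`. -/
def IsMaximumMatching (G : SimpleGraph V) (M : G.Subgraph) : Prop :=
  M.IsMatching ∧ ∀ M' : G.Subgraph, M'.IsMatching → M'.edgeSet.ncard ≤ M.edgeSet.ncard

/-- A vertex is essential if it is covered by every maximum matching. -/
def Essential (G : SimpleGraph V) (v : V) : Prop :=
  ∀ M : G.Subgraph, IsMaximumMatching G M → v ∈ M.verts

/-- The `D`-part of the Gallai–Edmonds decomposition: inessential vertices. -/
def geD (G : SimpleGraph V) : Set V := {v | ¬ Essential G v}

/-- The `A`-part of the Gallai–Edmonds decomposition. -/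
def geA (G : SimpleGraph V) : Set V := {v | v ∉ geD G ∧ ∃ u ∈ geD G, G.Adj v u}

/-- The `C`-part of the Gallai–Edmonds decomposition. -/
def geC (G : SimpleGraph V) : Set V := {v | v ∉ geD G ∧ v ∉ geA G}

/-- The vertex sets of the connected components of the induced subgraph `G[D]`,
viewed as subsets of the ambient vertex set. -/
def componentSets (G : SimpleGraph V) (D : Set V) : Set (Set V) :=
  {S | ∃ c : (G.induce D).ConnectedComponent, S = Subtype.val '' c.supp}

/-- The vertex sets of the connected components of `G`. -/
def compSets (G : SimpleGraph V) : Set (Set V) :=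
  {S | ∃ c : G.ConnectedComponent, S = c.supp}

/-- `G` is CAD-complete: distinct vertices of `C` are adjacent, vertices of `A` are
adjacent to all other vertices, and every component of `G[D]` is a clique. -/
def CADComplete (G : SimpleGraph V) : Prop :=
  (∀ u ∈ geC G, ∀ v ∈ geC G, u ≠ v → G.Adj u v) ∧
  (∀ u ∈ geA G, ∀ v, u ≠ v → G.Adj u v) ∧
  (∀ S ∈ componentSets G (geD G), G.IsClique S)

/-- `G` is a disjoint union of odd cliques. -/
def DComplete (G : SimpleGraph V) : Prop :=
  ∀ c : G.ConnectedComponent, G.IsClique c.supp ∧ Odd c.supp.ncard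

/-- The number of copies of `K_ℓ` (complete subgraphs on `ℓ` vertices) in `G`. -/
noncomputable def cliqueCount (G : SimpleGraph V) (ℓ : ℕ) : ℕ :=
  {s : Finset V | G.IsNClique ℓ s}.ncard

/-- The clique-cone graph `G_{n,x,y}` on vertex set `Fin n`: the first `x` vertices form
the clique set `X`, the next `y` vertices form the cone set `Y`, and two distinct
vertices are adjacent iff both lie in `X` or at least one lies in `Y`. -/
def cliqueCone (n x y : ℕ) : SimpleGraph (Fin n) :=
  SimpleGraph.fromRel (fun u v =>
    (u.val < x ∧ v.val < x) ∨ (x ≤ u.val ∧ u.val < x + y) ∨ (x ≤ v.val ∧ v.val < x + y))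

/-- `𝒢` is a `q`-colouring of `G`: a family of spanning subgraphs whose union is `G`. -/
def IsColouring {q : ℕ} (G : SimpleGraph V) (𝒢 : Fin q → SimpleGraph V) : Prop :=
  (⨆ j, 𝒢 j) = G

/-- A colouring is `(t₁K₂,…,t_qK₂)`-free if the `j`-th colour has no matching of size `t j`. -/
def IsFree {q : ℕ} (t : Fin q → ℕ) (𝒢 : Fin q → SimpleGraph V) : Prop :=
  ∀ j, matchingNumber (𝒢 j) ≤ t j - 1

/-- `φ_{ℓ,n}(x,y) = C(x+y,ℓ) + C(y,ℓ−1)·(n−x−y)`. -/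
def phi (ℓ n x y : ℕ) : ℕ :=
  Nat.choose (x + y) ℓ + Nat.choose y (ℓ - 1) * (n - x - y)

/-- The incidence graph of an indexed family of subsets of `U`. -/
def incidenceGraph {U I : Type*} (K : I → Finset U) : SimpleGraph (U ⊕ I) :=
  SimpleGraph.fromRel (fun a b => ∃ u i, a = Sum.inl u ∧ b = Sum.inr i ∧ u ∈ K i)

section Helpers
open SimpleGraph
open scoped symmDiff

variable {G : SimpleGraph V}

lemma matchingPartner_unique {M : G.Subgraph} (hM : M.IsMatching) {w z u : V}
    (hwz : M.Adj w z) (hwu : M.Adj w u) : u = z :=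
  (hM (M.edge_vert hwz)).unique hwu hwz

lemma matching_bddAbove [Fintype V] :
    BddAbove {n | ∃ M : G.Subgraph, M.IsMatching ∧ M.edgeSet.ncard = n} := by
  refine ⟨(Set.univ : Set (Sym2 V)).ncard, ?_⟩
  rintro n ⟨M, _, rfl⟩
  exact Set.ncard_le_ncard (Set.subset_univ _) (Set.toFinite _)

lemma matching_le_matchingNumber [Fintype V] {M : G.Subgraph} (hM : M.IsMatching) :
    M.edgeSet.ncard ≤ matchingNumber G :=
  le_csSup matching_bddAbove ⟨M, hM, rfl⟩

lemma exists_maximumMatching [Fintype V] (G : SimpleGraph V) :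
    ∃ M : G.Subgraph, IsMaximumMatching G M ∧ M.edgeSet.ncard = matchingNumber G := by
  have hne : {n | ∃ M : G.Subgraph, M.IsMatching ∧ M.edgeSet.ncard = n}.Nonempty := by
    refine ⟨0, ⊥, ?_, by simp⟩
    intro v hv
    simp [SimpleGraph.Subgraph.verts_bot] at hv
  obtain ⟨M, hM, hcard⟩ := Nat.sSup_mem hne matching_bddAbove
  exact ⟨M, ⟨hM, fun M' hM' => hcard ▸ matching_le_matchingNumber hM'⟩, hcard⟩

lemma IsMaximumMatching.ncard_eq [Fintype V] {M : G.Subgraph}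
    (hM : IsMaximumMatching G M) : M.edgeSet.ncard = matchingNumber G := by
  obtain ⟨N, hN, hNcard⟩ := exists_maximumMatching G
  exact le_antisymm (matching_le_matchingNumber hM.1) (hNcard ▸ hM.2 N hN.1)

lemma isMaximumMatching_of_ncard [Fintype V] {M : G.Subgraph} (hM : M.IsMatching)
    (h : M.edgeSet.ncard = matchingNumber G) : IsMaximumMatching G M :=
  ⟨hM, fun M' hM' => h ▸ matching_le_matchingNumber hM'⟩

/-- Deleting a matched pair from a matching. -/
lemma matching_deletePair {M : G.Subgraph} (hM : M.IsMatching) {w z : V}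
    (hwz : M.Adj w z) : (M.deleteVerts {w, z}).IsMatching := by
  rintro v ⟨hv, hv'⟩
  simp only [Set.mem_insert_iff, Set.mem_singleton_iff, not_or] at hv'
  obtain ⟨u, hu, huniq⟩ := hM hv
  refine ⟨u, ?_, ?_⟩
  · simp only [Subgraph.deleteVerts_adj]
    refine ⟨hv, by simp [hv'.1, hv'.2], M.edge_vert hu.symm, ?_, hu⟩
    simp only [Set.mem_insert_iff, Set.mem_singleton_iff, not_or]
    constructor
    · rintro rfl
      exact hv'.2 (matchingPartner_unique hM hwz hu.symm)
    · rintro rfl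
      exact hv'.1 (matchingPartner_unique hM hwz.symm hu.symm)
  · intro y hy
    exact huniq y ((Subgraph.deleteVerts_adj.mp hy).2.2.2.2)

lemma deletePair_edgeSet {M : G.Subgraph} (hM : M.IsMatching) {w z : V}
    (hwz : M.Adj w z) :
    (M.deleteVerts {w, z}).edgeSet = M.edgeSet \ {s(w, z)} := by
  ext e
  induction e with
  | _ x y =>
    simp only [Subgraph.mem_edgeSet, Subgraph.deleteVerts_adj, Set.mem_diff,
      Set.mem_singleton_iff, Set.mem_insert_iff, not_or]
    constructor
    · rintro ⟨hx, ⟨hxw, hxz⟩, hy, ⟨hyw, hyz⟩, hadj⟩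
      refine ⟨hadj, ?_⟩
      rw [Sym2.eq_iff]
      rintro (⟨rfl, rfl⟩ | ⟨rfl, rfl⟩) <;> simp_all
    · rintro ⟨hadj, hne⟩
      rw [Sym2.eq_iff, not_or] at hne
      have hx := M.edge_vert hadj
      have hy := M.edge_vert hadj.symm
      refine ⟨hx, ⟨?_, ?_⟩, hy, ⟨?_, ?_⟩, hadj⟩
      · rintro rfl; exact hne.1 ⟨rfl, matchingPartner_unique hM hwz hadj⟩
      · rintro rfl; exact hne.2 ⟨rfl, matchingPartner_unique hM hwz.symm hadj⟩
      · rintro rfl; exact hne.2 ⟨matchingPartner_unique hM hwz hadj.symm, rfl⟩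
      · rintro rfl; exact hne.1 ⟨matchingPartner_unique hM hwz.symm hadj.symm, rfl⟩

/-- Extending a matching by an edge on two uncovered vertices. -/
lemma matching_extend {M : G.Subgraph} (hM : M.IsMatching) {u v : V}
    (huv : G.Adj u v) (hu : u ∉ M.verts) (hv : v ∉ M.verts) :
    (M ⊔ G.subgraphOfAdj huv).IsMatching :=
  hM.sup (Subgraph.IsMatching.subgraphOfAdj huv)
    (by rw [hM.support_eq_verts, support_subgraphOfAdj]
        rw [Set.disjoint_right]
        rintro x (rfl | rfl) <;> simp_all)

lemma extend_edgeSet (M : G.Subgraph) {u v : V} (huv : G.Adj u v) :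
    (M ⊔ G.subgraphOfAdj huv).edgeSet = insert s(u, v) M.edgeSet := by
  rw [Subgraph.edgeSet_sup, edgeSet_subgraphOfAdj, Set.union_comm, Set.singleton_union]

lemma extend_edgeSet_ncard [Fintype V] {M : G.Subgraph} {u v : V}
    (huv : G.Adj u v) (hu : u ∉ M.verts) :
    (M ⊔ G.subgraphOfAdj huv).edgeSet.ncard = M.edgeSet.ncard + 1 := by
  rw [extend_edgeSet M huv]
  exact Set.ncard_insert_of_notMem
    (fun h => hu (M.edge_vert (Subgraph.mem_edgeSet.mp h))) (Set.toFinite _)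

/-- No maximum matching misses both endpoints of an edge. -/
lemma not_missed_of_adj [Fintype V] {M : G.Subgraph} (hM : IsMaximumMatching G M)
    {u v : V} (huv : G.Adj u v) (hu : u ∉ M.verts) (hv : v ∉ M.verts) : False := by
  have h1 := matching_extend hM.1 huv hu hv
  have h2 := matching_le_matchingNumber h1
  rw [extend_edgeSet_ncard huv hu, hM.ncard_eq] at h2
  omega

/-- A matching covers twice as many vertices as it has edges. -/
lemma matching_verts_ncard [Fintype V] {M : G.Subgraph} (hM : M.IsMatching) :
    M.verts.ncard = 2 * M.edgeSet.ncard := by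
  classical
  generalize hn : M.verts.ncard = n
  induction n using Nat.strong_induction_on generalizing M with
  | _ n ih =>
    rcases Set.eq_empty_or_nonempty M.verts with hemp | ⟨v, hv⟩
    · have : M.edgeSet = ∅ := by
        ext e
        induction e with
        | _ x y =>
          simp only [Subgraph.mem_edgeSet, Set.mem_empty_iff_false, iff_false]
          intro h
          exact absurd (M.edge_vert h) (by simp [hemp])
      simp [← hn, hemp, this]
    · obtain ⟨w, hw, _⟩ := hM hv
      have hvw : v ≠ w := (M.adj_sub hw).ne
      have hwm : w ∈ M.verts := M.edge_vert hw.symm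
      have hM' := matching_deletePair hM hw
      have hvc : (M.deleteVerts {v, w}).verts.ncard = n - 2 := by
        rw [Subgraph.deleteVerts_verts, ← hn,
          Set.ncard_diff (by
            rintro x (rfl | h)
            · exact hv
            · exact Set.mem_singleton_iff.mp h ▸ hwm)]
        simp [Set.ncard_pair hvw]
      have hec : (M.deleteVerts {v, w}).edgeSet = M.edgeSet \ {s(v, w)} :=
        deletePair_edgeSet hM hw
      have hn2 : 2 ≤ n := by
        rw [← hn]
        have hsub : {v, w} ⊆ M.verts := by
          rintro x (rfl | h)
          · exact hv
          · exact Set.mem_singleton_iff.mp h ▸ hwm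
        calc 2 = ({v, w} : Set V).ncard := (Set.ncard_pair hvw).symm
        _ ≤ _ := Set.ncard_le_ncard hsub (Set.toFinite _)
      have hih := ih (n - 2) (by omega) hM' hvc
      have hmem : s(v, w) ∈ M.edgeSet := Subgraph.mem_edgeSet.mpr hw
      have hcard : M.edgeSet.ncard = (M.edgeSet \ {s(v, w)}).ncard + 1 := by
        rw [Set.ncard_diff_singleton_of_mem hmem]
        have : 0 < M.edgeSet.ncard := (Set.ncard_pos (Set.toFinite _)).mpr ⟨_, hmem⟩
        omega
      rw [hcard, ← hec]
      omega

end Helpers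

section Transfer
open SimpleGraph

/-- Transfer a subgraph to another ambient graph containing all its edges. -/
def transferSub {G H : SimpleGraph V} (M : G.Subgraph)
    (h : ∀ ⦃x y⦄, M.Adj x y → H.Adj x y) : H.Subgraph where
  verts := M.verts
  Adj := M.Adj
  adj_sub := fun hxy => h hxy
  edge_vert := fun hxy => M.edge_vert hxy
  symm := M.symm

@[simp] lemma transferSub_verts {G H : SimpleGraph V} (M : G.Subgraph)
    (h : ∀ ⦃x y⦄, M.Adj x y → H.Adj x y) : (transferSub M h).verts = M.verts := rfl

@[simp] lemma transferSub_adj {G H : SimpleGraph V} (M : G.Subgraph)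
    (h : ∀ ⦃x y⦄, M.Adj x y → H.Adj x y) {x y : V} :
    (transferSub M h).Adj x y ↔ M.Adj x y := Iff.rfl

@[simp] lemma transferSub_edgeSet {G H : SimpleGraph V} (M : G.Subgraph)
    (h : ∀ ⦃x y⦄, M.Adj x y → H.Adj x y) : (transferSub M h).edgeSet = M.edgeSet := by
  ext e
  induction e with
  | _ x y => simp [SimpleGraph.Subgraph.mem_edgeSet]

lemma transferSub_isMatching {G H : SimpleGraph V} {M : G.Subgraph}
    (h : ∀ ⦃x y⦄, M.Adj x y → H.Adj x y) (hM : M.IsMatching) :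
    (transferSub M h).IsMatching := hM

lemma matchingNumber_mono [Fintype V] {G H : SimpleGraph V} (hGH : G ≤ H) :
    matchingNumber G ≤ matchingNumber H := by
  obtain ⟨M, hM, hcard⟩ := exists_maximumMatching G
  rw [← hcard]
  exact matching_le_matchingNumber
    (transferSub_isMatching (fun x y hxy => hGH (M.adj_sub hxy)) hM.1) |>.trans_eq'
    (by rw [transferSub_edgeSet])

end Transfer

section Saturated
open SimpleGraph

variable [Fintype V] {G₀ G : SimpleGraph V}

/-- In an edge-maximal graph with given matching number, the endpoints of any non-edge
are simultaneously missed by some maximum matching. -/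
lemma missing_pair (hmax : Maximal (fun H => G₀ ≤ H ∧ matchingNumber H = matchingNumber G₀) G)
    {u v : V} (hne : u ≠ v) (hnadj : ¬ G.Adj u v) :
    ∃ M : G.Subgraph, IsMaximumMatching G M ∧ u ∉ M.verts ∧ v ∉ M.verts := by
  set H := G ⊔ fromEdgeSet {s(u, v)} with hH
  have hGH : G ≤ H := le_sup_left
  have hHuv : H.Adj u v := by
    simp [hH, SimpleGraph.fromEdgeSet_adj, hne]
  have hlt : G < H := lt_of_le_of_ne hGH (fun h => hnadj (h ▸ hHuv))
  have hνH : matchingNumber H ≠ matchingNumber G₀ :=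
    fun h => hmax.not_prop_of_gt hlt ⟨hmax.prop.1.trans hGH, h⟩
  have hmono : matchingNumber G ≤ matchingNumber H := matchingNumber_mono hGH
  have hν : matchingNumber G₀ < matchingNumber H :=
    lt_of_le_of_ne (hmax.prop.2 ▸ hmono) (Ne.symm hνH)
  obtain ⟨MH, hMH, hMHcard⟩ := exists_maximumMatching H
  -- the new edge must be used
  have huse : MH.Adj u v := by
    by_contra huse
    have hsub : ∀ ⦃x y⦄, MH.Adj x y → G.Adj x y := by
      intro x y hxy
      rcases (sup_adj _ _ _ _).mp (MH.adj_sub hxy) with h | h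
      · exact h
      · exfalso
        rw [SimpleGraph.fromEdgeSet_adj, Set.mem_singleton_iff, Sym2.eq_iff] at h
        rcases h.1 with ⟨rfl, rfl⟩ | ⟨rfl, rfl⟩
        · exact huse hxy
        · exact huse hxy.symm
    have := matching_le_matchingNumber (transferSub_isMatching hsub hMH.1)
    rw [transferSub_edgeSet, hMHcard, hmax.prop.2] at this
    omega
  -- delete u,v to get a maximum matching of G missing u,v
  have hdel := matching_deletePair hMH.1 huse
  have hsub : ∀ ⦃x y⦄, (MH.deleteVerts {u, v}).Adj x y → G.Adj x y := by
    intro x y hxy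
    rw [Subgraph.deleteVerts_adj] at hxy
    obtain ⟨hx, hx', hy, hy', hxy⟩ := hxy
    simp only [Set.mem_insert_iff, Set.mem_singleton_iff, not_or] at hx' hy'
    rcases (sup_adj _ _ _ _).mp (MH.adj_sub hxy) with h | h
    · exact h
    · exfalso
      rw [SimpleGraph.fromEdgeSet_adj, Set.mem_singleton_iff, Sym2.eq_iff] at h
      rcases h.1 with ⟨rfl, rfl⟩ | ⟨rfl, rfl⟩
      · exact hx'.1 rfl
      · exact hx'.2 rfl
  refine ⟨transferSub _ hsub, ?_, ?_, ?_⟩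
  · refine isMaximumMatching_of_ncard (transferSub_isMatching hsub hdel) ?_
    have hkle := matching_le_matchingNumber (transferSub_isMatching hsub hdel)
    have hcount : (transferSub _ hsub).edgeSet.ncard = matchingNumber H - 1 := by
      rw [transferSub_edgeSet, deletePair_edgeSet hMH.1 huse,
        Set.ncard_diff_singleton_of_mem (Subgraph.mem_edgeSet.mpr huse),
        hMHcard]
    rw [hcount] at hkle ⊢
    have h2 := hmax.prop.2
    omega
  · simp [Subgraph.deleteVerts_verts]
  · simp [Subgraph.deleteVerts_verts]

end Saturated

section KeyLemma
open SimpleGraph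
open scoped symmDiff

variable {G : SimpleGraph V}

/-- Rotating a matching: remove the pair `{w,z}`, re-match `z` to an uncovered vertex `a`. -/
lemma rotate_all {M : G.Subgraph} (hM : M.IsMatching) {w z a : V} (hwz : M.Adj w z)
    (hza : G.Adj z a) (ha : a ∉ M.verts) :
    ((M.deleteVerts {w, z}) ⊔ G.subgraphOfAdj hza).IsMatching ∧
    ((M.deleteVerts {w, z}) ⊔ G.subgraphOfAdj hza).verts = (M.verts \ {w, z}) ∪ {z, a} ∧
    ((M.deleteVerts {w, z}) ⊔ G.subgraphOfAdj hza).edgeSet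
      = (M.edgeSet \ {s(w, z)}) ∪ {s(z, a)} := by
  have hdel := matching_deletePair hM hwz
  refine ⟨hdel.sup (Subgraph.IsMatching.subgraphOfAdj hza) ?_, ?_, ?_⟩
  · rw [hdel.support_eq_verts, support_subgraphOfAdj, Subgraph.deleteVerts_verts,
      Set.disjoint_right]
    rintro x (rfl | h)
    · rintro ⟨_, hz⟩; exact hz (by simp)
    · rw [Set.mem_singleton_iff] at h; subst h
      rintro ⟨hx, _⟩; exact ha hx
  · rw [Subgraph.verts_sup, Subgraph.deleteVerts_verts, subgraphOfAdj_verts]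
  · rw [Subgraph.edgeSet_sup, deletePair_edgeSet hM hwz, edgeSet_subgraphOfAdj]

lemma rotate_ncard [Fintype V] {M : G.Subgraph} {w z a : V}
    (hwzM : s(w, z) ∈ M.edgeSet) (hzaM : s(z, a) ∉ M.edgeSet) :
    ((M.edgeSet \ {s(w, z)}) ∪ {s(z, a)}).ncard = M.edgeSet.ncard := by
  rw [Set.union_singleton, Set.ncard_insert_of_notMem (by simp [hzaM]) (Set.toFinite _),
    Set.ncard_diff_singleton_of_mem hwzM]
  have : 0 < M.edgeSet.ncard := (Set.ncard_pos (Set.toFinite _)).mpr ⟨_, hwzM⟩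
  omega

/-- **Key lemma** (hole mover): if `w` is covered by the maximum matching `M` but missed by
some maximum matching `N`, then there is a maximum matching `P` missing `w` which still misses
all vertices missed by `M`, except possibly one. -/
lemma key_move [Fintype V] :
    ∀ (k : ℕ) (M N : G.Subgraph), (M.edgeSet ∆ N.edgeSet).ncard = k →
    IsMaximumMatching G M → IsMaximumMatching G N →
    ∀ w, w ∈ M.verts → w ∉ N.verts →
    ∃ P : G.Subgraph, IsMaximumMatching G P ∧ w ∉ P.verts ∧
      P.edgeSet ∆ M.edgeSet ⊆ M.edgeSet ∆ N.edgeSet ∧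
      ∃ t, ∀ x, x ∉ M.verts → x ≠ t → x ∉ P.verts := by
  intro k
  induction k using Nat.strong_induction_on with
  | _ k ih =>
  intro M N hk hM hN w hwM hwN
  obtain ⟨z, hwz, -⟩ := hM.1 hwM
  have hGwz : G.Adj w z := M.adj_sub hwz
  have hzM : z ∈ M.verts := M.edge_vert hwz.symm
  have hzN : z ∈ N.verts := by
    by_contra hzN
    exact not_missed_of_adj hN hGwz hwN hzN
  obtain ⟨a, hza, -⟩ := hN.1 hzN
  have haw : a ≠ w := fun h => hwN (N.edge_vert (h ▸ hza).symm)
  have hGza : G.Adj z a := N.adj_sub hza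
  have haz : a ≠ z := hGza.ne.symm
  have hwzM : s(w, z) ∈ M.edgeSet := Subgraph.mem_edgeSet.mpr hwz
  have hwzN : s(w, z) ∉ N.edgeSet :=
    fun h => hwN (N.edge_vert (Subgraph.mem_edgeSet.mp h))
  have hzaN : s(z, a) ∈ N.edgeSet := Subgraph.mem_edgeSet.mpr hza
  have hzaM : s(z, a) ∉ M.edgeSet :=
    fun h => haw (matchingPartner_unique hM.1 hwz.symm (Subgraph.mem_edgeSet.mp h))
  have hwzza : s(w, z) ≠ s(z, a) := by
    intro h
    rw [Sym2.eq_iff] at h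
    rcases h with ⟨h1, -⟩ | ⟨h1, -⟩
    · exact hGwz.ne h1
    · exact haw h1.symm
  have hwzMN : s(w, z) ∈ M.edgeSet ∆ N.edgeSet := Set.mem_symmDiff.mpr (.inl ⟨hwzM, hwzN⟩)
  have hzaMN : s(z, a) ∈ M.edgeSet ∆ N.edgeSet := Set.mem_symmDiff.mpr (.inr ⟨hzaN, hzaM⟩)
  by_cases haM : a ∈ M.verts
  · -- recursive case: rotate `N` and recurse
    obtain ⟨hN₁m, hN₁v, hN₁e⟩ := rotate_all hN.1 hza.symm hGwz.symm hwN
    set N₁ := (N.deleteVerts {a, z}) ⊔ G.subgraphOfAdj hGwz.symm with hN₁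
    have hN₁max : IsMaximumMatching G N₁ := by
      refine isMaximumMatching_of_ncard hN₁m ?_
      rw [hN₁e, rotate_ncard (w := a) (z := z) (a := w) (by rwa [Sym2.eq_swap])
        (by rwa [Sym2.eq_swap]), hN.ncard_eq]
    rw [Sym2.eq_swap (a := a) (b := z), Sym2.eq_swap (a := z) (b := w)] at hN₁e
    -- `N₁` misses `a`
    have haN₁ : a ∉ N₁.verts := by
      rw [hN₁v]
      rintro (⟨-, ha⟩ | ha)
      · exact ha (by simp)
      · rcases ha with rfl | rfl
        · exact haz rfl
        · exact haw rfl
    -- the symmetric difference shrinks by exactly the two swapped edges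
    have hdiff : M.edgeSet ∆ N₁.edgeSet = (M.edgeSet ∆ N.edgeSet) \ {s(w, z), s(z, a)} := by
      ext e
      constructor
      · intro he
        rcases Set.mem_symmDiff.mp he with ⟨heM, heN₁⟩ | ⟨heN₁, heM⟩
        · rw [hN₁e] at heN₁
          have hne1 : e ≠ s(w, z) := fun h => heN₁ (h ▸ Set.mem_union_right _ rfl)
          have hne2 : e ≠ s(z, a) := fun h => hzaM (h ▸ heM)
          have heN : e ∉ N.edgeSet := fun h => heN₁ (Set.mem_union_left _ ⟨h, hne2⟩)
          exact ⟨Set.mem_symmDiff.mpr (.inl ⟨heM, heN⟩),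
            fun h => ((Set.mem_insert_iff.mp h).elim hne1
              (fun h' => hne2 (Set.mem_singleton_iff.mp h')))⟩
        · rw [hN₁e] at heN₁
          rcases heN₁ with ⟨heN, hne2⟩ | h
          · have hne1 : e ≠ s(w, z) := fun h => heM (h ▸ hwzM)
            exact ⟨Set.mem_symmDiff.mpr (.inr ⟨heN, heM⟩),
              fun h => ((Set.mem_insert_iff.mp h).elim hne1
                (fun h' => hne2 (Set.mem_singleton_iff.mp h')))⟩
          · rw [Set.mem_singleton_iff] at h
            exact absurd (h ▸ hwzM) heM
      · rintro ⟨hmem, hpair⟩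
        have hne1 : e ≠ s(w, z) := fun h => hpair (h ▸ Set.mem_insert _ _)
        have hne2 : e ≠ s(z, a) := fun h => hpair (h ▸ Set.mem_insert_of_mem _ rfl)
        rcases Set.mem_symmDiff.mp hmem with ⟨heM, heN⟩ | ⟨heN, heM⟩
        · refine Set.mem_symmDiff.mpr (.inl ⟨heM, ?_⟩)
          rw [hN₁e]
          rintro (⟨h, -⟩ | h)
          · exact heN h
          · exact hne1 (Set.mem_singleton_iff.mp h)
        · refine Set.mem_symmDiff.mpr (.inr ⟨?_, heM⟩)
          rw [hN₁e]
          exact Set.mem_union_left _ ⟨heN, hne2⟩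
    have hcard2 : ({s(w, z), s(z, a)} : Set (Sym2 V)).ncard = 2 := Set.ncard_pair hwzza
    have hsubpair : ({s(w, z), s(z, a)} : Set (Sym2 V)) ⊆ M.edgeSet ∆ N.edgeSet := by
      rintro e (rfl | he)
      · exact hwzMN
      · rw [Set.mem_singleton_iff] at he; subst he; exact hzaMN
    have hk2 : 2 ≤ k := by
      rw [← hk, ← hcard2]
      exact Set.ncard_le_ncard hsubpair (Set.toFinite _)
    have hdc : (M.edgeSet ∆ N₁.edgeSet).ncard = k - 2 := by
      rw [hdiff, Set.ncard_diff hsubpair (Set.toFinite _), hcard2, hk]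
    obtain ⟨P, hPmax, haP, hPsub, t, ht⟩ :=
      ih (k - 2) (by omega) M N₁ hdc hM hN₁max a haM haN₁
    -- `P` still contains the edge `wz`
    have hPwz : s(w, z) ∈ P.edgeSet := by
      by_contra hc
      have : s(w, z) ∈ P.edgeSet ∆ M.edgeSet := Set.mem_symmDiff.mpr (.inr ⟨hwzM, hc⟩)
      have := hPsub this
      rw [hdiff] at this
      exact this.2 (.inl rfl)
    have hPwzadj : P.Adj w z := Subgraph.mem_edgeSet.mp hPwz
    -- rotate `P`
    obtain ⟨hP'm, hP'v, hP'e⟩ := rotate_all hPmax.1 hPwzadj hGza haP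
    set P' := (P.deleteVerts {w, z}) ⊔ G.subgraphOfAdj hGza with hP'
    have hzaP : s(z, a) ∉ P.edgeSet :=
      fun h => haP (P.edge_vert (Subgraph.mem_edgeSet.mp h).symm)
    refine ⟨P', isMaximumMatching_of_ncard hP'm
      (by rw [hP'e, rotate_ncard hPwz hzaP, hPmax.ncard_eq]), ?_, ?_, t, ?_⟩
    · rw [hP'v]
      rintro (⟨-, hw⟩ | hw)
      · exact hw (by simp)
      · rcases hw with rfl | rfl
        · exact hGwz.ne rfl
        · exact haw rfl
    · intro e he
      rcases Set.mem_symmDiff.mp he with ⟨heP', heM⟩ | ⟨heM, heP'⟩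
      · rw [hP'e] at heP'
        rcases heP' with ⟨heP, -⟩ | he'
        · have : e ∈ P.edgeSet ∆ M.edgeSet := Set.mem_symmDiff.mpr (.inl ⟨heP, heM⟩)
          have := hPsub this
          rw [hdiff] at this
          exact this.1
        · rw [Set.mem_singleton_iff] at he'; subst he'
          exact Set.mem_symmDiff.mpr (.inr ⟨hzaN, heM⟩)
      · rw [hP'e] at heP'
        by_cases hewz : e = s(w, z)
        · subst hewz
          exact Set.mem_symmDiff.mpr (.inl ⟨heM, hwzN⟩)
        · have heP : e ∉ P.edgeSet := fun h => heP' (Set.mem_union_left _ ⟨h, hewz⟩)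
          have : e ∈ P.edgeSet ∆ M.edgeSet := Set.mem_symmDiff.mpr (.inr ⟨heM, heP⟩)
          have := hPsub this
          rw [hdiff] at this
          exact this.1
    · intro x hxM hxt
      rw [hP'v]
      rintro (⟨hx, -⟩ | hx)
      · exact ht x hxM hxt hx
      · rcases hx with rfl | rfl
        · exact hxM hzM
        · exact hxM haM
  · -- base case: rotate `M`
    obtain ⟨hPm, hPv, hPe⟩ := rotate_all hM.1 hwz hGza haM
    set P := (M.deleteVerts {w, z}) ⊔ G.subgraphOfAdj hGza with hP
    refine ⟨P, isMaximumMatching_of_ncard hPm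
      (by rw [hPe, rotate_ncard hwzM hzaM, hM.ncard_eq]), ?_, ?_, a, ?_⟩
    · rw [hPv]
      rintro (⟨-, hw⟩ | hw)
      · exact hw (by simp)
      · rcases hw with rfl | rfl
        · exact hGwz.ne rfl
        · exact haw rfl
    · intro e he
      rcases Set.mem_symmDiff.mp he with ⟨heP, heM⟩ | ⟨heM, heP⟩
      · rw [hPe] at heP
        rcases heP with ⟨heM', -⟩ | he'
        · exact absurd heM' heM
        · rw [Set.mem_singleton_iff] at he'; subst he'
          exact Set.mem_symmDiff.mpr (.inr ⟨hzaN, heM⟩)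
      · rw [hPe] at heP
        have : e = s(w, z) := by
          by_contra hne
          exact heP (.inl ⟨heM, hne⟩)
        subst this
        exact Set.mem_symmDiff.mpr (.inl ⟨heM, hwzN⟩)
    · intro x hxM hxa
      rw [hPv]
      rintro (⟨hx, -⟩ | hx)
      · exact hxM hx
      · rcases hx with rfl | rfl
        · exact hxM hzM
        · exact hxa rfl

end KeyLemma

section Assembly
open SimpleGraph

variable [Fintype V] {G₀ G : SimpleGraph V}

lemma not_mem_geD_iff {v : V} : v ∉ geD G ↔ Essential G v := by
  simp [geD]

lemma exists_missed_of_lt [Nonempty V] (h : 2 * matchingNumber G < Fintype.card V) :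
    ∃ u, u ∈ geD G := by
  obtain ⟨M, hM, hcard⟩ := exists_maximumMatching G
  have hv := matching_verts_ncard hM.1
  rw [hcard] at hv
  have : M.verts ≠ Set.univ := by
    intro hu
    rw [hu, Set.ncard_univ, Nat.card_eq_fintype_card] at hv
    omega
  obtain ⟨u, hu⟩ : ∃ u, u ∉ M.verts := by
    by_contra hc
    push_neg at hc
    exact this (Set.eq_univ_of_forall hc)
  exact ⟨u, fun hess => hu (hess M hM)⟩

/-- In a maximal graph, every essential vertex is adjacent to all other vertices. -/
lemma essential_universal
    (hmax : Maximal (fun H => G₀ ≤ H ∧ matchingNumber H = matchingNumber G₀) G)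
    {v : V} (hv : Essential G v) {x : V} (hne : v ≠ x) : G.Adj v x := by
  by_contra hnadj
  obtain ⟨M, hM, hvM, -⟩ := missing_pair hmax hne hnadj
  exact hvM (hv M hM)

/-- In a maximal graph, two neighbours of an inessential vertex are adjacent. -/
lemma triangle_lemma
    (hmax : Maximal (fun H => G₀ ≤ H ∧ matchingNumber H = matchingNumber G₀) G)
    {x w y : V} (hxw : G.Adj x w) (hwy : G.Adj w y) (hne : x ≠ y)
    (hw : ¬ Essential G w) : G.Adj x y := by
  by_contra hnadj
  obtain ⟨M, hM, hxM, hyM⟩ := missing_pair hmax hne hnadj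
  have hwM : w ∈ M.verts := by
    by_contra hwM
    exact not_missed_of_adj hM hxw hxM hwM
  rw [Essential] at hw
  push_neg at hw
  obtain ⟨N, hN, hwN⟩ := hw
  obtain ⟨P, hPmax, hwP, -, t, ht⟩ :=
    key_move _ M N rfl hM hN w hwM hwN
  by_cases hxt : x = t
  · have hyt : y ≠ t := fun h => hne (h ▸ hxt ▸ rfl)
    exact not_missed_of_adj hPmax hwy.symm (ht y hyM hyt) hwP
  · exact not_missed_of_adj hPmax hxw (ht x hxM hxt) hwP

/-- Within a component of `G[D]` of a maximal graph, all vertices are pairwise adjacent. -/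
lemma walk_adj
    (hmax : Maximal (fun H => G₀ ≤ H ∧ matchingNumber H = matchingNumber G₀) G)
    {x y : ↥(geD G)} (p : (G.induce (geD G)).Walk x y) (hne : (x : V) ≠ (y : V)) :
    G.Adj x y := by
  induction p with
  | nil => exact absurd rfl hne
  | @cons u b y h p ih =>
    have hub : G.Adj u b := by simpa using h
    by_cases hby : (b : V) = (y : V)
    · exact hby ▸ hub
    · exact triangle_lemma hmax hub (ih hby) hne b.2

end Assembly

/-- `AD`-completion: every graph with no perfect matching is a spanning
subgraph of an `AD`-complete graph with the same matching number. -/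
theorem exists_AD_completion [Fintype V] (G : SimpleGraph V)
    (h : 2 * matchingNumber G < Fintype.card V) :
    ∃ G' : SimpleGraph V, G ≤ G' ∧ matchingNumber G' = matchingNumber G ∧
      CADComplete G' ∧ geC G' = ∅ := by
  classical
  have : Nonempty V := by
    rcases isEmpty_or_nonempty V with he | hne
    · rw [Fintype.card_eq_zero] at h; omega
    · exact hne
  obtain ⟨G', hle, hmax⟩ := Finite.exists_le_maximal
    (p := fun H => G ≤ H ∧ matchingNumber H = matchingNumber G) ⟨le_refl G, rfl⟩
  have hν : matchingNumber G' = matchingNumber G := hmax.prop.2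
  have hcard : 2 * matchingNumber G' < Fintype.card V := by rw [hν]; exact h
  obtain ⟨u₀, hu₀⟩ := exists_missed_of_lt hcard
  have hC : geC G' = ∅ := by
    ext v
    simp only [Set.mem_empty_iff_false, iff_false]
    rintro ⟨hvD, hvA⟩
    have hess : Essential G' v := not_mem_geD_iff.mp hvD
    have hne : v ≠ u₀ := fun hv => hvD (hv ▸ hu₀)
    exact hvA ⟨hvD, u₀, hu₀, essential_universal hmax hess hne⟩
  refine ⟨G', hle, hν, ⟨?_, ?_, ?_⟩, hC⟩
  · intro u hu
    rw [hC] at hu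
    exact absurd hu (Set.notMem_empty u)
  · intro u hu v hne
    exact essential_universal hmax (not_mem_geD_iff.mp hu.1) hne
  · rintro S ⟨c, rfl⟩
    rintro x ⟨xs, hxs, rfl⟩ y ⟨ys, hys, rfl⟩ hne
    rw [SimpleGraph.ConnectedComponent.mem_supp_iff] at hxs hys
    obtain ⟨p⟩ := SimpleGraph.ConnectedComponent.exact (hxs.trans hys.symm)
    exact walk_adj hmax p hne

end GRT
end

section
/- Let G = (V,E) be a finite simple graph that is a disjoint union of odd cliques (so GE(G) = (∅,∅,V)). Let L be a connected component of G of size 2κ+1 with κ ≥ 1, let S ⊆ L with |S| = κ, and let K ⊆ V∖S with |K| > κ be such that the vertices of K lie in pairwise distinct connected components of G. Let G' be obtained from G by deleting all edges inside L and adding all edges between distinct vertices of S and all edges between S and K. Then GE(G') = (∅, S, V∖S), ν(G') = ν(G), and the connected components of G'[V∖S] are exactly the connected components of G other than L, together with κ+1 isolated vertices (the vertices of L∖S). -/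
namespace GRT

variable {V : Type*}

section Aux

variable {V : Type*}
open SimpleGraph Set

lemma bot_isMatching (G : SimpleGraph V) : (⊥ : G.Subgraph).IsMatching := by
  intro v hv
  simp [Subgraph.verts_bot] at hv

lemma mn_set_nonempty (G : SimpleGraph V) :
    {n | ∃ M : G.Subgraph, M.IsMatching ∧ M.edgeSet.ncard = n}.Nonempty :=
  ⟨0, ⊥, bot_isMatching G, by simp⟩

lemma mn_set_bddAbove [Fintype V] (G : SimpleGraph V) :
    BddAbove {n | ∃ M : G.Subgraph, M.IsMatching ∧ M.edgeSet.ncard = n} := by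
  classical
  refine ⟨Nat.card (Sym2 V), ?_⟩
  rintro n ⟨M, _, rfl⟩
  calc M.edgeSet.ncard ≤ (Set.univ : Set (Sym2 V)).ncard :=
        Set.ncard_le_ncard (Set.subset_univ _) Set.finite_univ
    _ = Nat.card (Sym2 V) := Set.ncard_univ _

lemma le_matchingNumber [Fintype V] {G : SimpleGraph V} {M : G.Subgraph}
    (hM : M.IsMatching) : M.edgeSet.ncard ≤ matchingNumber G :=
  le_csSup (mn_set_bddAbove G) ⟨M, hM, rfl⟩

lemma exists_maximum [Fintype V] (G : SimpleGraph V) :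
    ∃ M : G.Subgraph, M.IsMatching ∧ M.edgeSet.ncard = matchingNumber G := by
  have := Nat.sSup_mem (mn_set_nonempty G) (mn_set_bddAbove G)
  exact this

lemma isMaximum_of_card_eq [Fintype V] {G : SimpleGraph V} {M : G.Subgraph}
    (hM : M.IsMatching) (h : M.edgeSet.ncard = matchingNumber G) :
    IsMaximumMatching G M :=
  ⟨hM, fun M' hM' => h ▸ le_matchingNumber hM'⟩

lemma IsMaximumMatching.card_eq [Fintype V] {G : SimpleGraph V} {M : G.Subgraph}
    (hM : IsMaximumMatching G M) : M.edgeSet.ncard = matchingNumber G := by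
  obtain ⟨M', hM', hcard⟩ := exists_maximum G
  exact le_antisymm (le_matchingNumber hM.1) (hcard ▸ hM.2 M' hM')


open SimpleGraph Set

lemma verts_ncard_eq_two_mul [Fintype V] {G : SimpleGraph V} {M : G.Subgraph}
    (hM : M.IsMatching) : M.verts.ncard = 2 * M.edgeSet.ncard := by
  classical
  have hfib : ∀ e : M.edgeSet,
      (Finset.univ.filter fun v : M.verts => hM.toEdge v = e).card = 2 := by
    rintro ⟨e, he⟩
    induction' e with u w
    have hadj : M.Adj u w := he
    have hne : u ≠ w := (M.adj_sub hadj).ne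
    have hu : u ∈ M.verts := M.edge_vert hadj
    have hw : w ∈ M.verts := M.edge_vert hadj.symm
    have : (Finset.univ.filter fun v : M.verts => hM.toEdge v = ⟨s(u, w), he⟩)
        = {⟨u, hu⟩, ⟨w, hw⟩} := by
      ext ⟨x, hx⟩
      simp only [Finset.mem_filter, Finset.mem_univ, true_and, Finset.mem_insert,
        Finset.mem_singleton, Subtype.mk_eq_mk]
      constructor
      · intro hte
        have hxe : x ∈ (s(u, w) : Sym2 V) := by
          have := congrArg Subtype.val hte
          simp only [Subgraph.IsMatching.toEdge] at this
          rw [← this]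
          exact Sym2.mem_mk_left _ _
        rwa [Sym2.mem_iff] at hxe
      · rintro (rfl | rfl)
        · exact hM.toEdge_eq_of_adj hadj
        · rw [hM.toEdge_eq_of_adj hadj.symm]
          simp [Sym2.eq_swap]
    rw [this, Finset.card_insert_of_notMem (by simp [hne]), Finset.card_singleton]
  have hcards : Fintype.card M.verts = ∑ e : M.edgeSet, 2 := by
    rw [← Finset.card_univ,
      Finset.card_eq_sum_card_fiberwise (f := hM.toEdge)
        (fun v _ => Finset.mem_univ _)]
    exact Finset.sum_congr rfl fun e _ => hfib e
  have h1 : M.verts.ncard = Fintype.card M.verts := by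
    rw [Set.ncard_eq_toFinset_card', Set.toFinset_card]
  have h2 : M.edgeSet.ncard = Fintype.card M.edgeSet := by
    rw [Set.ncard_eq_toFinset_card', Set.toFinset_card]
  rw [h1, h2, hcards, Finset.sum_const, Finset.card_univ]
  ring


open SimpleGraph Set

/-- Every even finite clique has a matching covering exactly it. -/
lemma clique_matching [Fintype V] {G : SimpleGraph V} (s : Finset V)
    (hc : ∀ u ∈ s, ∀ v ∈ s, u ≠ v → G.Adj u v) (he : Even s.card) :
    ∃ M : G.Subgraph, M.IsMatching ∧ M.verts = ↑s := by
  classical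
  generalize hn : s.card = n
  induction n using Nat.strong_induction_on generalizing s with
  | _ n ih =>
  subst hn
  rcases Finset.eq_empty_or_nonempty s with rfl | ⟨u, hu⟩
  · exact ⟨⊥, bot_isMatching G, by simp⟩
  · have h1 : 1 ≤ s.card := Finset.card_pos.mpr ⟨u, hu⟩
    have h2 : 2 ≤ s.card := by
      rcases he with ⟨k, hk⟩; omega
    obtain ⟨w, hw⟩ : (s.erase u).Nonempty := by
      rw [← Finset.card_pos, Finset.card_erase_of_mem hu]; omega
    have hws : w ∈ s := Finset.mem_of_mem_erase hw
    have hne : u ≠ w := fun h => (Finset.ne_of_mem_erase hw h.symm)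
    have hadj : G.Adj u w := hc u hu w hws hne
    set s' := (s.erase u).erase w with hs'
    have hcard' : s'.card = s.card - 2 := by
      rw [hs', Finset.card_erase_of_mem hw, Finset.card_erase_of_mem hu]; omega
    have hsub : s' ⊆ s := (Finset.erase_subset _ _).trans (Finset.erase_subset _ _)
    obtain ⟨M', hM', hMv'⟩ := ih (s.card - 2) (by omega) s'
      (fun a ha b hb hab => hc a (hsub ha) b (hsub hb) hab)
      (by rcases he with ⟨k, hk⟩; rw [hcard']; exact ⟨k - 1, by omega⟩) hcard'
    refine ⟨M' ⊔ G.subgraphOfAdj hadj, ?_, ?_⟩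
    · refine hM'.sup (Subgraph.IsMatching.subgraphOfAdj hadj) ?_
      rw [hM'.support_eq_verts, (Subgraph.IsMatching.subgraphOfAdj hadj).support_eq_verts,
        hMv', subgraphOfAdj_verts]
      rw [Set.disjoint_right]
      rintro x (rfl | rfl) <;> simp [hs', hne]
    · rw [Subgraph.verts_sup, hMv', subgraphOfAdj_verts]
      ext x
      simp only [Set.mem_union, Finset.coe_erase, Set.mem_diff, Set.mem_insert_iff,
        Set.mem_singleton_iff, Finset.mem_coe, hs']
      constructor
      · rintro (⟨⟨hx, _⟩, _⟩ | rfl | rfl) <;> simp_all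
      · intro hx
        by_cases hxu : x = u
        · tauto
        by_cases hxw : x = w
        · tauto
        exact Or.inl (by simp [Finset.mem_erase, hx, hxu, hxw])

/-- An odd set all of whose `M`-covered vertices... : if an odd set is fully covered
by a matching, some vertex is matched outside. -/
lemma crossing [Fintype V] {G : SimpleGraph V} {M : G.Subgraph} (hM : M.IsMatching)
    {Q : Set V} (hQ : Q ⊆ M.verts) (hodd : Odd Q.ncard) :
    ∃ v ∈ Q, ∃ w, w ∉ Q ∧ M.Adj v w := by
  classical
  by_contra hcon
  push_neg at hcon
  have hind : (M.induce Q).IsMatching := by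
    intro v hv
    simp only [Subgraph.induce_verts] at hv
    obtain ⟨w, hw, huniq⟩ := hM (hQ hv)
    have hwQ : w ∈ Q := by
      by_contra hwQ
      exact hcon v hv w hwQ hw
    refine ⟨w, ⟨hv, hwQ, hw⟩, fun y hy => huniq y hy.2.2⟩
  have hev := hind.even_card
  rw [show (M.induce Q).verts = Q from rfl] at hev
  rw [Set.ncard_eq_toFinset_card'] at hodd
  exact (Nat.not_even_iff_odd.mpr hodd) hev

open SimpleGraph Set

lemma counting [Fintype V] {H : SimpleGraph V} {M : H.Subgraph} (hM : M.IsMatching)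
    (S : Set V) (𝒬 : Set (Set V))
    (hdisj : 𝒬.Pairwise Disjoint)
    (hcov : ⋃₀ 𝒬 = Sᶜ)
    (hodd : ∀ Q ∈ 𝒬, Odd Q.ncard)
    (hclosed : ∀ u v, H.Adj u v → v ∉ S → ∀ Q ∈ 𝒬, u ∈ Q → v ∈ Q) :
    𝒬.ncard + 2 * (S \ M.verts).ncard ≤ S.ncard + (M.vertsᶜ).ncard := by
  classical
  rcases 𝒬.eq_empty_or_nonempty with rfl | ⟨Q₀, hQ₀⟩
  · simp only [Set.ncard_empty, zero_add]
    have h1 : (S \ M.verts) ⊆ M.vertsᶜ := fun x hx => hx.2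
    have h2 : (S \ M.verts) ⊆ S := Set.diff_subset
    have := Set.ncard_le_ncard h1 (Set.toFinite _)
    have := Set.ncard_le_ncard h2 (Set.toFinite _)
    omega
  haveI : Nonempty V := by
    have hpos := (hodd Q₀ hQ₀).pos
    obtain ⟨x, hx⟩ := Set.nonempty_of_ncard_ne_zero (s := Q₀) (by omega)
    exact ⟨x⟩
  set Full : Set (Set V) := {Q ∈ 𝒬 | Q ⊆ M.verts} with hFull
  -- for each full Q there is s ∈ S matched into Q
  have hex : ∀ Q ∈ Full, ∃ w, (w ∈ S ∧ w ∈ M.verts) ∧ ∃ v ∈ Q, M.Adj w v := by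
    rintro Q ⟨hQ, hQM⟩
    obtain ⟨v, hvQ, w, hwQ, hvw⟩ := crossing hM hQM (hodd Q hQ)
    have hwS : w ∈ S := by
      by_contra hwS
      exact hwQ (hclosed v w (M.adj_sub hvw) hwS Q hQ hvQ)
    exact ⟨w, ⟨hwS, M.edge_vert hvw.symm⟩, v, hvQ, hvw.symm⟩
  set f : Set V → V := fun Q =>
    if h : ∃ w, (w ∈ S ∧ w ∈ M.verts) ∧ ∃ v ∈ Q, M.Adj w v then h.choose
    else Classical.arbitrary V with hf
  have hfmem : ∀ Q ∈ Full, f Q ∈ S ∩ M.verts ∧ ∃ v ∈ Q, M.Adj (f Q) v := by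
    intro Q hQ
    have h := hex Q hQ
    simp only [hf, dif_pos h]
    exact ⟨⟨h.choose_spec.1.1, h.choose_spec.1.2⟩, h.choose_spec.2⟩
  have hFullcard : Full.ncard ≤ (S ∩ M.verts).ncard := by
    refine Set.ncard_le_ncard_of_injOn f (fun Q hQ => (hfmem Q hQ).1) ?_ (Set.toFinite _)
    intro Q₁ h₁ Q₂ h₂ hfe
    obtain ⟨v₁, hv₁, hadj₁⟩ := (hfmem Q₁ h₁).2
    obtain ⟨v₂, hv₂, hadj₂⟩ := (hfmem Q₂ h₂).2
    rw [hfe] at hadj₁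
    obtain ⟨w, _, huniq⟩ := hM (M.edge_vert hadj₂)
    have : v₁ = v₂ := (huniq v₁ hadj₁).trans (huniq v₂ hadj₂).symm
    subst this
    by_contra hne
    exact Set.disjoint_left.mp (hdisj h₁.1 h₂.1 hne) hv₁ hv₂
  set g : Set V → V := fun Q =>
    if h : ∃ v, v ∈ Q ∧ v ∉ M.verts then h.choose else Classical.arbitrary V with hg
  have hgmem : ∀ Q ∈ 𝒬 \ Full, g Q ∈ Q ∧ g Q ∈ M.vertsᶜ ∩ Sᶜ := by
    rintro Q ⟨hQ, hQF⟩
    have h : ∃ v, v ∈ Q ∧ v ∉ M.verts := by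
      by_contra hcon
      push_neg at hcon
      exact hQF ⟨hQ, hcon⟩
    simp only [hg, dif_pos h]
    refine ⟨h.choose_spec.1, h.choose_spec.2, ?_⟩
    have : h.choose ∈ ⋃₀ 𝒬 := ⟨Q, hQ, h.choose_spec.1⟩
    rw [hcov] at this
    exact this
  have hNotcard : (𝒬 \ Full).ncard ≤ (M.vertsᶜ ∩ Sᶜ).ncard := by
    refine Set.ncard_le_ncard_of_injOn g (fun Q hQ => (hgmem Q hQ).2) ?_ (Set.toFinite _)
    intro Q₁ h₁ Q₂ h₂ hge
    by_contra hne
    have := Set.disjoint_left.mp (hdisj h₁.1 h₂.1 hne) (hgmem Q₁ h₁).1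
    rw [hge] at this
    exact this (hgmem Q₂ h₂).1
  have h1 : (𝒬 \ Full).ncard + Full.ncard = 𝒬.ncard :=
    Set.ncard_diff_add_ncard_of_subset (Set.sep_subset _ _) (Set.toFinite _)
  have h2 : (S ∩ M.verts).ncard + (S \ M.verts).ncard = S.ncard :=
    Set.ncard_inter_add_ncard_diff_eq_ncard S M.verts (Set.toFinite _)
  have h3 : (M.vertsᶜ ∩ Sᶜ).ncard + (S \ M.verts).ncard = M.vertsᶜ.ncard := by
    have e1 : M.vertsᶜ ∩ Sᶜ = M.vertsᶜ \ S := by ext x; simp [Set.mem_diff, and_comm]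
    have e2 : S \ M.verts = M.vertsᶜ ∩ S := by
      ext x
      simp only [Set.mem_diff, Set.mem_inter_iff, Set.mem_compl_iff]
      tauto
    rw [e1, e2, add_comm]
    exact Set.ncard_inter_add_ncard_diff_eq_ncard _ S (Set.toFinite _)
  omega


open SimpleGraph Set

lemma reach_stays {H : SimpleGraph V} {D : Set V} {𝒬 : Set (Set V)}
    (hclosed : ∀ u v, H.Adj u v → v ∈ D → ∀ Q ∈ 𝒬, u ∈ Q → v ∈ Q)
    {u v : D} (h : (H.induce D).Reachable u v) :
    ∀ Q ∈ 𝒬, ↑u ∈ Q → ↑v ∈ Q := by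
  obtain ⟨w⟩ := h
  induction w with
  | nil => exact fun Q _ h => h
  | cons ha p ih =>
    rename_i a b c
    intro Q hQ haQ
    exact ih Q hQ (hclosed ↑a ↑b (by exact ha) b.2 Q hQ haQ)

lemma comp_supp_eq {H : SimpleGraph V} {D : Set V} {𝒬 : Set (Set V)}
    (hdisj : 𝒬.Pairwise Disjoint) (hcov : ⋃₀ 𝒬 = D)
    (hclq : ∀ Q ∈ 𝒬, H.IsClique Q)
    (hclosed : ∀ u v, H.Adj u v → v ∈ D → ∀ Q ∈ 𝒬, u ∈ Q → v ∈ Q)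
    {Q : Set V} (hQ : Q ∈ 𝒬) (u₀ : D) (hu₀ : ↑u₀ ∈ Q) :
    Subtype.val '' ((H.induce D).connectedComponentMk u₀).supp = Q := by
  apply Set.eq_of_subset_of_subset
  · rintro x ⟨⟨y, hyD⟩, hy, rfl⟩
    rw [ConnectedComponent.mem_supp_iff, ConnectedComponent.eq] at hy
    exact reach_stays hclosed hy.symm Q hQ hu₀
  · intro y hyQ
    have hyD : y ∈ D := by rw [← hcov]; exact ⟨Q, hQ, hyQ⟩
    refine ⟨⟨y, hyD⟩, ?_, rfl⟩
    rw [ConnectedComponent.mem_supp_iff, ConnectedComponent.eq]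
    by_cases hyu : (⟨y, hyD⟩ : D) = u₀
    · rw [hyu]
    · refine Adj.reachable ?_
      have : H.Adj y ↑u₀ := hclq Q hQ hyQ hu₀ (fun h => hyu (Subtype.ext h))
      exact this

lemma componentSets_eq {H : SimpleGraph V} {D : Set V} {𝒬 : Set (Set V)}
    (hdisj : 𝒬.Pairwise Disjoint) (hcov : ⋃₀ 𝒬 = D)
    (hne : ∀ Q ∈ 𝒬, Q.Nonempty)
    (hclq : ∀ Q ∈ 𝒬, H.IsClique Q)
    (hclosed : ∀ u v, H.Adj u v → v ∈ D → ∀ Q ∈ 𝒬, u ∈ Q → v ∈ Q) :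
    componentSets H D = 𝒬 := by
  apply Set.eq_of_subset_of_subset
  · rintro X ⟨c, rfl⟩
    obtain ⟨u₀, hu₀⟩ := c.exists_rep
    have huD : (↑u₀ : V) ∈ ⋃₀ 𝒬 := by rw [hcov]; exact u₀.2
    obtain ⟨Q, hQ, huQ⟩ := huD
    have := comp_supp_eq hdisj hcov hclq hclosed hQ u₀ huQ
    rw [show (H.induce D).connectedComponentMk u₀ = c from hu₀] at this
    rw [this]
    exact hQ
  · intro Q hQ
    obtain ⟨y, hy⟩ := hne Q hQ
    have hyD : y ∈ D := by rw [← hcov]; exact ⟨Q, hQ, hy⟩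
    exact ⟨(H.induce D).connectedComponentMk ⟨y, hyD⟩,
      (comp_supp_eq hdisj hcov hclq hclosed hQ ⟨y, hyD⟩ hy).symm⟩


open SimpleGraph Set

lemma constructG [Fintype V] {G : SimpleGraph V} (hG : DComplete G) :
    ∃ M : G.Subgraph, M.IsMatching ∧
      (M.vertsᶜ).ncard ≤ Nat.card G.ConnectedComponent := by
  classical
  set x : G.ConnectedComponent → V := fun C => C.exists_rep.choose with hx
  have hxmem : ∀ C, x C ∈ C.supp := fun C => by
    rw [ConnectedComponent.mem_supp_iff]; exact C.exists_rep.choose_spec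
  set sC : G.ConnectedComponent → Finset V := fun C => C.supp.toFinset.erase (x C) with hsC
  have hcoe : ∀ C, (↑(sC C) : Set V) = C.supp \ {x C} := fun C => by
    simp [hsC, Finset.coe_erase, Set.coe_toFinset]
  have hM : ∀ C : G.ConnectedComponent, ∃ M : G.Subgraph,
      M.IsMatching ∧ M.verts = ↑(sC C) := by
    intro C
    refine clique_matching (sC C) ?_ ?_
    · intro a ha b hb hab
      have ha' : a ∈ C.supp := by
        have := Finset.mem_of_mem_erase ha; rwa [Set.mem_toFinset] at this
      have hb' : b ∈ C.supp := by
        have := Finset.mem_of_mem_erase hb; rwa [Set.mem_toFinset] at this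
      exact (hG C).1 ha' hb' hab
    · have hodd := (hG C).2
      have : (sC C).card = C.supp.toFinset.card - 1 :=
        Finset.card_erase_of_mem (by rw [Set.mem_toFinset]; exact hxmem C)
      rw [Set.ncard_eq_toFinset_card'] at hodd
      rcases hodd with ⟨k, hk⟩
      exact ⟨k, by omega⟩
  set f : G.ConnectedComponent → G.Subgraph := fun C => (hM C).choose with hf
  have hfm : ∀ C, (f C).IsMatching := fun C => (hM C).choose_spec.1
  have hfv : ∀ C, (f C).verts = C.supp \ {x C} := fun C => by
    rw [hf]; rw [(hM C).choose_spec.2, hcoe]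
  refine ⟨⨆ C, f C, ?_, ?_⟩
  · refine Subgraph.IsMatching.iSup hfm ?_
    intro C C' hne
    rw [(hfm C).support_eq_verts, (hfm C').support_eq_verts, hfv, hfv]
    exact (pairwise_disjoint_supp_connectedComponent G hne).mono
      Set.diff_subset Set.diff_subset
  · have hverts : (⨆ C, f C).verts = ⋃ C, (C.supp \ {x C}) := by
      rw [Subgraph.verts_iSup]
      exact Set.iUnion_congr hfv
    have hsub : ((⨆ C, f C).verts)ᶜ ⊆ Set.range x := by
      intro u hu
      rw [Set.mem_compl_iff, hverts, Set.mem_iUnion] at hu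
      push_neg at hu
      have := hu (G.connectedComponentMk u)
      rcases (Classical.em (u = x (G.connectedComponentMk u))) with h | h
      · exact ⟨_, h.symm⟩
      · exact absurd ⟨ConnectedComponent.connectedComponentMk_mem, h⟩ this
    calc ((⨆ C, f C).verts)ᶜ.ncard ≤ (Set.range x).ncard :=
          Set.ncard_le_ncard hsub (Set.toFinite _)
      _ = (x '' Set.univ).ncard := by rw [Set.image_univ]
      _ ≤ (Set.univ : Set G.ConnectedComponent).ncard := Set.ncard_image_le (Set.toFinite _)
      _ = Nat.card G.ConnectedComponent := Set.ncard_univ _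


open SimpleGraph Set

variable [Fintype V] {G : SimpleGraph V} {L S K : Set V} {κ : ℕ}

def Gp (G : SimpleGraph V) (L S K : Set V) : SimpleGraph V :=
  SimpleGraph.fromRel (fun u v =>
    (G.Adj u v ∧ ¬(u ∈ L ∧ v ∈ L)) ∨ (u ∈ S ∧ v ∈ S) ∨ (u ∈ S ∧ v ∈ K))

lemma gp_adj {u v : V} : (Gp G L S K).Adj u v ↔ u ≠ v ∧
    ((G.Adj u v ∧ ¬(u ∈ L ∧ v ∈ L)) ∨ (u ∈ S ∧ v ∈ S) ∨ (u ∈ S ∧ v ∈ K) ∨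
     (v ∈ S ∧ u ∈ S) ∨ (v ∈ S ∧ u ∈ K)) := by
  rw [Gp, SimpleGraph.fromRel_adj]
  constructor
  · rintro ⟨hne, (⟨h1, h2⟩ | h | h) | (⟨h1, h2⟩ | h | h)⟩
    · exact ⟨hne, Or.inl ⟨h1, h2⟩⟩
    · exact ⟨hne, Or.inr (Or.inl h)⟩
    · exact ⟨hne, Or.inr (Or.inr (Or.inl h))⟩
    · exact ⟨hne, Or.inl ⟨h1.symm, fun hc => h2 ⟨hc.2, hc.1⟩⟩⟩
    · exact ⟨hne, Or.inr (Or.inl ⟨h.2, h.1⟩)⟩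
    · exact ⟨hne, Or.inr (Or.inr (Or.inr (Or.inr h)))⟩
  · rintro ⟨hne, (h | h | h | h | h)⟩
    · exact ⟨hne, Or.inl (Or.inl h)⟩
    · exact ⟨hne, Or.inl (Or.inr (Or.inl h))⟩
    · exact ⟨hne, Or.inl (Or.inr (Or.inr h))⟩
    · exact ⟨hne, Or.inl (Or.inr (Or.inl ⟨h.2, h.1⟩))⟩
    · exact ⟨hne, Or.inr (Or.inr (Or.inr h))⟩

/-- component supp ≠ L is a clique in `Gp`. -/
lemma gp_clique_comp (hG : DComplete G) (hL : L ∈ compSets G)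
    {C : G.ConnectedComponent} (hC : C.supp ≠ L) : (Gp G L S K).IsClique C.supp := by
  obtain ⟨CL, rfl⟩ := hL
  intro a ha b hb hab
  rw [gp_adj]
  refine ⟨hab, Or.inl ⟨(hG C).1 ha hb hab, ?_⟩⟩
  rintro ⟨haL, -⟩
  rw [ConnectedComponent.mem_supp_iff] at ha haL
  exact hC (by rw [← ha, haL])

/-- S-vertices are adjacent in Gp to everything except themselves (we only need: to S and K). -/
lemma gp_adj_SK {s k : V} (hs : s ∈ S) (hk : k ∈ K) (hKS : Disjoint K S) :
    (Gp G L S K).Adj s k := by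
  rw [gp_adj]
  exact ⟨fun h => (Set.disjoint_left.mp hKS hk (h ▸ hs)), Or.inr (Or.inr (Or.inl ⟨hs, hk⟩))⟩

/-- Edges of Gp avoiding S: stay within G-components other than L, and do not leave L∖S. -/
lemma gp_edge_structure {u w : V} (hL : L ∈ compSets G)
    (h : (Gp G L S K).Adj u w) (hu : u ∉ S) (hw : w ∉ S) :
    G.Adj u w ∧ ¬(u ∈ L ∧ w ∈ L) := by
  rw [gp_adj] at h
  rcases h.2 with h' | h' | h' | h' | h'
  · exact h'
  all_goals tauto


open SimpleGraph Set

variable [Fintype V] {G : SimpleGraph V} {L S K : Set V} {κ : ℕ}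

lemma compSets_pairwise (G : SimpleGraph V) : (compSets G).Pairwise Disjoint := by
  rintro X ⟨c, rfl⟩ Y ⟨d, rfl⟩ hne
  exact pairwise_disjoint_supp_connectedComponent G (fun h => hne (by rw [h]))

lemma compSets_cover (G : SimpleGraph V) : ⋃₀ compSets G = (∅ : Set V)ᶜ := by
  rw [Set.compl_empty]
  apply Set.eq_univ_of_forall
  intro v
  exact ⟨(G.connectedComponentMk v).supp, ⟨_, rfl⟩, ConnectedComponent.connectedComponentMk_mem⟩

lemma compSets_closed (G : SimpleGraph V) {u w : V} (h : G.Adj u w) :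
    ∀ Q ∈ compSets G, u ∈ Q → w ∈ Q := by
  rintro Q ⟨c, rfl⟩ hu
  rw [ConnectedComponent.mem_supp_iff] at hu ⊢
  rw [← hu]
  exact ConnectedComponent.connectedComponentMk_eq_of_adj h.symm

lemma compSets_ncard (G : SimpleGraph V) :
    (compSets G).ncard = Nat.card G.ConnectedComponent := by
  have : compSets G = Set.range (ConnectedComponent.supp (G := G)) := by
    ext Q; simp [compSets, Set.mem_range, eq_comm]
  rw [this, ← Set.image_univ,
    Set.ncard_image_of_injective _ ConnectedComponent.supp_injective, Set.ncard_univ]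

/-- The partition of Sᶜ used for G'. -/
def Qp (G : SimpleGraph V) (L S : Set V) : Set (Set V) :=
  (compSets G \ {L}) ∪ ((fun v => ({v} : Set V)) '' (L \ S))

lemma Qp_pairwise (hL : L ∈ compSets G) (hSL : S ⊆ L) : (Qp G L S).Pairwise Disjoint := by
  obtain ⟨CL, hCL⟩ := hL
  rintro X (⟨⟨c, rfl⟩, hXL⟩ | ⟨a, ha, rfl⟩) Y (⟨⟨d, rfl⟩, hYL⟩ | ⟨b, hb, rfl⟩) hne
  · exact pairwise_disjoint_supp_connectedComponent G (fun h => hne (by rw [h]))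
  · rw [Set.disjoint_singleton_right]
    intro hbc
    rw [ConnectedComponent.mem_supp_iff] at hbc
    apply hXL
    rw [Set.mem_singleton_iff, ← hbc, hCL, ConnectedComponent.supp_inj,
      ← ConnectedComponent.mem_supp_iff, ← hCL]
    exact hb.1
  · rw [Set.disjoint_singleton_left]
    intro hbc
    rw [ConnectedComponent.mem_supp_iff] at hbc
    apply hYL
    rw [Set.mem_singleton_iff, ← hbc, hCL, ConnectedComponent.supp_inj,
      ← ConnectedComponent.mem_supp_iff, ← hCL]
    exact ha.1
  · rw [Set.disjoint_singleton_left, Set.mem_singleton_iff]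
    exact fun h => hne (by rw [h])

lemma Qp_cover (hL : L ∈ compSets G) (hSL : S ⊆ L) : ⋃₀ Qp G L S = Sᶜ := by
  obtain ⟨CL, hCL⟩ := hL
  ext u
  simp only [Set.mem_sUnion, Set.mem_compl_iff]
  constructor
  · rintro ⟨Q, hQ, huQ⟩ huS
    rcases hQ with ⟨⟨c, rfl⟩, hQL⟩ | ⟨a, ha, rfl⟩
    · apply hQL
      rw [ConnectedComponent.mem_supp_iff] at huQ
      rw [Set.mem_singleton_iff, hCL, ← huQ, ConnectedComponent.supp_inj,
        ← ConnectedComponent.mem_supp_iff, ← hCL]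
      exact hSL huS
    · rw [Set.mem_singleton_iff] at huQ
      exact ha.2 (huQ ▸ huS)
  · intro huS
    by_cases huL : u ∈ L
    · exact ⟨{u}, Or.inr ⟨u, ⟨huL, huS⟩, rfl⟩, rfl⟩
    · refine ⟨(G.connectedComponentMk u).supp, Or.inl ⟨⟨_, rfl⟩, ?_⟩,
        ConnectedComponent.connectedComponentMk_mem⟩
      rw [Set.mem_singleton_iff]
      intro h
      exact huL (h ▸ ConnectedComponent.connectedComponentMk_mem)

lemma Qp_nonempty (hG : DComplete G) : ∀ Q ∈ Qp G L S, Q.Nonempty := by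
  rintro Q (⟨⟨c, rfl⟩, -⟩ | ⟨a, -, rfl⟩)
  · have := (hG c).2.pos
    exact Set.nonempty_of_ncard_ne_zero (by omega)
  · exact ⟨a, rfl⟩

lemma Qp_odd (hG : DComplete G) : ∀ Q ∈ Qp G L S, Odd Q.ncard := by
  rintro Q (⟨⟨c, rfl⟩, -⟩ | ⟨a, -, rfl⟩)
  · exact (hG c).2
  · simp [Set.ncard_singleton]

lemma Qp_clique (hG : DComplete G) (hL : L ∈ compSets G) :
    ∀ Q ∈ Qp G L S, (Gp G L S K).IsClique Q := by
  rintro Q (⟨⟨c, rfl⟩, hQL⟩ | ⟨a, -, rfl⟩)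
  · exact gp_clique_comp hG hL (fun h => hQL (by rw [h]; rfl))
  · exact SimpleGraph.isClique_singleton _

lemma Qp_closed (hL : L ∈ compSets G) (hSL : S ⊆ L) :
    ∀ u w, (Gp G L S K).Adj u w → w ∈ Sᶜ → ∀ Q ∈ Qp G L S, u ∈ Q → w ∈ Q := by
  intro u w hadj hwS Q hQ huQ
  have huS : u ∉ S := by
    rcases hQ with ⟨⟨c, rfl⟩, hQL⟩ | ⟨a, ha, rfl⟩
    · intro huS2
      apply hQL
      obtain ⟨CL, hCL⟩ := hL
      rw [ConnectedComponent.mem_supp_iff] at huQ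
      rw [Set.mem_singleton_iff, hCL, ← huQ, ConnectedComponent.supp_inj,
        ← ConnectedComponent.mem_supp_iff, ← hCL]
      exact hSL huS2
    · rw [Set.mem_singleton_iff] at huQ
      exact huQ ▸ ha.2
  obtain ⟨hGadj, hnL⟩ := gp_edge_structure hL hadj huS hwS
  rcases hQ with ⟨⟨c, rfl⟩, hQL⟩ | ⟨a, ha, rfl⟩
  · exact compSets_closed G hGadj _ ⟨c, rfl⟩ huQ
  · rw [Set.mem_singleton_iff] at huQ
    subst huQ
    exfalso
    -- u ∈ L∖S, G.Adj u w ⇒ w ∈ L (same component), contradicting hnL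
    obtain ⟨CL, hCL⟩ := hL
    have huL : u ∈ L := ha.1
    have : w ∈ L := by
      rw [hCL] at huL ⊢
      rw [ConnectedComponent.mem_supp_iff] at huL ⊢
      rw [← huL]
      exact ConnectedComponent.connectedComponentMk_eq_of_adj hGadj.symm
    exact hnL ⟨huL, this⟩


open SimpleGraph Set

variable [Fintype V] {G : SimpleGraph V} {L S K : Set V} {κ : ℕ}

lemma Qp_ncard (hL : L ∈ compSets G) (hSL : S ⊆ L) (hLcard : L.ncard = 2 * κ + 1)
    (hScard : S.ncard = κ) :
    (Qp G L S).ncard = Nat.card G.ConnectedComponent + κ := by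
  have hdisj : Disjoint (compSets G \ {L}) ((fun v => ({v} : Set V)) '' (L \ S)) := by
    rw [Set.disjoint_right]
    rintro X ⟨a, ha, rfl⟩ ⟨⟨c, hc⟩, hXL⟩
    apply hXL
    obtain ⟨CL, hCL⟩ := hL
    have hac : a ∈ c.supp := by rw [← hc]; rfl
    have haL : a ∈ CL.supp := by rw [← hCL]; exact ha.1
    rw [ConnectedComponent.mem_supp_iff] at hac haL
    rw [Set.mem_singleton_iff, hc, ← hac, haL, hCL]
  rw [Qp, Set.ncard_union_eq hdisj (Set.toFinite _) (Set.toFinite _)]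
  have h1 : (compSets G \ {L}).ncard + ({L} : Set (Set V)).ncard = (compSets G).ncard :=
    Set.ncard_diff_add_ncard_of_subset (Set.singleton_subset_iff.mpr hL) (Set.toFinite _)
  rw [Set.ncard_singleton] at h1
  have h2 : ((fun v => ({v} : Set V)) '' (L \ S)).ncard = (L \ S).ncard :=
    Set.ncard_image_of_injective _ (fun a b h => by
      simpa using (Set.singleton_eq_singleton_iff.mp h))
  have h3 : (L \ S).ncard = κ + 1 := by
    rw [Set.ncard_diff hSL (Set.toFinite _), hLcard, hScard]; omega
  rw [h2, h3, compSets_ncard] at *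
  omega


open SimpleGraph Set

variable [Fintype V] {G : SimpleGraph V} {L S K : Set V} {κ : ℕ}

lemma constructGp (hG : DComplete G) (hL : L ∈ compSets G)
    (hSL : S ⊆ L) (hLcard : L.ncard = 2 * κ + 1) (hScard : S.ncard = κ)
    (hKS : Disjoint K S) (hKcard : κ < K.ncard)
    (hKscat : ∀ u ∈ K, ∀ v ∈ K, u ≠ v → ¬ G.Reachable u v)
    (v : V) (hv : v ∉ S) :
    ∃ M : (Gp G L S K).Subgraph, M.IsMatching ∧ v ∉ M.verts ∧
      (M.vertsᶜ).ncard ≤ Nat.card G.ConnectedComponent := by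
  classical
  obtain ⟨CL, hCL⟩ := hL
  have hLmem : L ∈ compSets G := ⟨CL, hCL⟩
  -- Step 1: choose T ⊆ K of size κ avoiding v's component
  set K' : Set V := {k ∈ K | ¬ G.Reachable k v} with hK'
  have hKdiff : (K \ K').ncard ≤ 1 := by
    rw [Set.ncard_le_one (Set.toFinite _)]
    rintro a ⟨haK, ha2⟩ b ⟨hbK, hb2⟩
    simp only [hK', Set.mem_setOf_eq, not_and, not_not] at ha2 hb2
    by_contra hne
    exact hKscat a haK b hbK hne ((ha2 haK).trans (hb2 hbK).symm)
  have hK'κ : κ ≤ K'.ncard := by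
    have hKsub : K ⊆ K' ∪ (K \ K') := by
      intro k hk
      by_cases h : k ∈ K'
      · exact Or.inl h
      · exact Or.inr ⟨hk, h⟩
    have := Set.ncard_le_ncard hKsub (Set.toFinite _)
    have := Set.ncard_union_le K' (K \ K')
    omega
  obtain ⟨T, hTK', hTcard⟩ := Set.exists_subset_card_eq hK'κ
  have hTK : T ⊆ K := fun k hk => (hTK' hk).1
  have hTnr : ∀ k ∈ T, ¬ G.Reachable k v := fun k hk => (hTK' hk).2
  -- Step 2 : the equivalence S ≃ T
  have hcards : Fintype.card ↥S = Fintype.card ↥T := by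
    rw [← Set.toFinset_card, ← Set.toFinset_card, ← Set.ncard_eq_toFinset_card',
      ← Set.ncard_eq_toFinset_card', hScard, hTcard]
  set e : ↥S ≃ ↥T := Fintype.equivOfCardEq hcards with he
  -- Step 3 : components other than CL and the missed vertex
  set ι2 := {C : G.ConnectedComponent // C ≠ CL} with hι2
  set x : ι2 → V := fun C =>
    if h : (T ∩ C.1.supp).Nonempty then h.choose
    else if v ∈ C.1.supp then v else C.1.exists_rep.choose with hx
  have hxmem : ∀ C : ι2, x C ∈ C.1.supp := by
    intro C
    show (if h : (T ∩ C.1.supp).Nonempty then h.choose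
      else if v ∈ C.1.supp then v else C.1.exists_rep.choose) ∈ C.1.supp
    split_ifs with h1 h2
    · exact h1.choose_spec.2
    · exact h2
    · rw [ConnectedComponent.mem_supp_iff]; exact C.1.exists_rep.choose_spec
  have hxT : ∀ C : ι2, ∀ k ∈ T, k ∈ C.1.supp → k = x C := by
    intro C k hkT hksupp
    have hne : (T ∩ C.1.supp).Nonempty := ⟨k, hkT, hksupp⟩
    show k = (if h : (T ∩ C.1.supp).Nonempty then h.choose
      else if v ∈ C.1.supp then v else C.1.exists_rep.choose)
    simp only [dif_pos hne]
    obtain ⟨htT, htsupp⟩ := hne.choose_spec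
    by_contra hkx
    refine hKscat k (hTK hkT) _ (hTK htT) hkx ?_
    rw [ConnectedComponent.mem_supp_iff] at hksupp htsupp
    exact ConnectedComponent.exact (hksupp.trans htsupp.symm)
  have hxv : ∀ C : ι2, v ∈ C.1.supp → x C = v := by
    intro C hvs
    have hne : ¬ (T ∩ C.1.supp).Nonempty := by
      rintro ⟨k, hkT, hksupp⟩
      refine hTnr k hkT ?_
      rw [ConnectedComponent.mem_supp_iff] at hksupp hvs
      exact ConnectedComponent.exact (hksupp.trans hvs.symm)
    show (if h : (T ∩ C.1.supp).Nonempty then h.choose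
      else if v ∈ C.1.supp then v else C.1.exists_rep.choose) = v
    simp only [dif_neg hne, if_pos hvs]
  -- Step 4 : matchings inside components ≠ L
  have hsuppne : ∀ C : ι2, C.1.supp ≠ L := by
    intro C h
    exact C.2 (ConnectedComponent.supp_injective (h.trans hCL))
  have hM : ∀ C : ι2, ∃ M : (Gp G L S K).Subgraph,
      M.IsMatching ∧ M.verts = ↑(C.1.supp.toFinset.erase (x C)) := by
    intro C
    refine clique_matching _ ?_ ?_
    · intro a ha b hb hab
      have ha' : a ∈ C.1.supp := by
        have := Finset.mem_of_mem_erase ha; rwa [Set.mem_toFinset] at this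
      have hb' : b ∈ C.1.supp := by
        have := Finset.mem_of_mem_erase hb; rwa [Set.mem_toFinset] at this
      exact gp_clique_comp hG hLmem (hsuppne C) ha' hb' hab
    · have hodd := (hG C.1).2
      have hcd : (C.1.supp.toFinset.erase (x C)).card = C.1.supp.toFinset.card - 1 :=
        Finset.card_erase_of_mem (by rw [Set.mem_toFinset]; exact hxmem C)
      rw [Set.ncard_eq_toFinset_card'] at hodd
      rcases hodd with ⟨j, hj⟩
      exact ⟨j, by omega⟩
  set f : ι2 → (Gp G L S K).Subgraph := fun C => (hM C).choose with hf
  have hfm : ∀ C, (f C).IsMatching := fun C => (hM C).choose_spec.1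
  have hfv : ∀ C, (f C).verts = C.1.supp \ {x C} := fun C => by
    rw [hf]; rw [(hM C).choose_spec.2]
    simp [Finset.coe_erase, Set.coe_toFinset]
  -- Step 5 : cross edges S–T
  set g : ↥S → (Gp G L S K).Subgraph :=
    fun s => (Gp G L S K).subgraphOfAdj (gp_adj_SK s.2 (hTK (e s).2) hKS) with hg
  have hgm : ∀ s, (g s).IsMatching := fun s => Subgraph.IsMatching.subgraphOfAdj _
  have hgv : ∀ s, (g s).verts = {(s : V), ((e s : V))} := fun s => by
    rw [hg]; exact subgraphOfAdj_verts _ _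
  -- Step 6 : assemble
  set F : ↥S ⊕ ι2 → (Gp G L S K).Subgraph := Sum.elim g f with hF
  have hdisjSC : ∀ (s : ↥S) (C : ι2), Disjoint (g s).verts (f C).verts := by
    intro s C
    rw [hgv, hfv, Set.disjoint_left]
    rintro z (rfl | rfl)
    · rintro ⟨hz, -⟩
      have hzL : (s : V) ∈ CL.supp := by rw [← hCL]; exact hSL s.2
      rw [ConnectedComponent.mem_supp_iff] at hz hzL
      exact C.2 (by rw [← hz, hzL])
    · rintro ⟨hz, hz2⟩
      exact hz2 (Set.mem_singleton_iff.mpr ((hxT C _ (e s).2 hz)))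
  have hSKne : ∀ (s : ↥S) (t : ↥T), (s : V) ≠ (t : V) := by
    intro s t h
    exact Set.disjoint_left.mp hKS (hTK (h ▸ t.2)) s.2
  have hMatch : (⨆ i, F i).IsMatching := by
    refine Subgraph.IsMatching.iSup (fun i => by cases i with
      | inl s => exact hgm s
      | inr C => exact hfm C) ?_
    intro i j hne
    cases i with
    | inl s => cases j with
      | inl s' =>
        simp only [hF, Sum.elim_inl]
        rw [(hgm s).support_eq_verts, (hgm s').support_eq_verts, hgv, hgv,
          Set.disjoint_left]
        have hss' : s ≠ s' := fun h => hne (by rw [h])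
        rintro z (rfl | rfl)
        · rintro (h | h)
          · exact hss' (Subtype.ext h)
          · exact hSKne s (e s') h
        · rintro (h | h)
          · exact hSKne s' (e s) h.symm
          · have : e s = e s' := Subtype.ext h
            exact hss' (e.injective this)
      | inr C =>
        simp only [hF, Sum.elim_inl, Sum.elim_inr]
        rw [(hgm s).support_eq_verts, (hfm C).support_eq_verts]
        exact hdisjSC s C
    | inr C => cases j with
      | inl s =>
        simp only [hF, Sum.elim_inl, Sum.elim_inr]
        rw [(hfm C).support_eq_verts, (hgm s).support_eq_verts]
        exact (hdisjSC s C).symm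
      | inr C' =>
        simp only [hF, Sum.elim_inr]
        rw [(hfm C).support_eq_verts, (hfm C').support_eq_verts, hfv, hfv]
        have : C.1 ≠ C'.1 := fun h => hne (by rw [Subtype.ext h])
        exact (pairwise_disjoint_supp_connectedComponent G this).mono
          Set.diff_subset Set.diff_subset
  have hverts : (⨆ i, F i).verts = ⋃ i, (F i).verts := Subgraph.verts_iSup
  have hvnot : v ∉ (⨆ i, F i).verts := by
    rw [hverts, Set.mem_iUnion]
    rintro ⟨i, hi⟩
    cases i with
    | inl s =>
      simp only [hF, Sum.elim_inl] at hi
      rw [hgv] at hi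
      rcases hi with rfl | rfl
      · exact hv s.2
      · exact hTnr _ (e s).2 (Reachable.refl _)
    | inr C =>
      simp only [hF, Sum.elim_inr] at hi
      rw [hfv] at hi
      exact hi.2 (Set.mem_singleton_iff.mpr (hxv C hi.1).symm)
  -- Step 7 : cardinality of uncovered vertices
  haveI : Fintype G.ConnectedComponent := Fintype.ofFinite _
  have hb : Nat.card ι2 + 1 = Nat.card G.ConnectedComponent := by
    have h5 : Nat.card ι2 = (({CL}ᶜ : Set G.ConnectedComponent)).ncard := by
      rw [← Nat.card_coe_set_eq]
      exact Nat.card_congr (Equiv.subtypeEquivRight (fun C => by simp))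
    have h6 := Set.ncard_add_ncard_compl ({CL} : Set G.ConnectedComponent)
      (Set.toFinite _) (Set.toFinite _)
    rw [Set.ncard_singleton] at h6
    omega
  have hTsub : T ⊆ (L \ S) ∪ Set.range x := by
    intro k hk
    by_cases hkc : G.connectedComponentMk k = CL
    · refine Or.inl ⟨?_, fun hkS => Set.disjoint_left.mp hKS (hTK hk) hkS⟩
      rw [hCL, ConnectedComponent.mem_supp_iff]; exact hkc
    · refine Or.inr ⟨⟨_, hkc⟩, (hxT ⟨_, hkc⟩ k hk ?_).symm⟩
      exact ConnectedComponent.connectedComponentMk_mem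
  have hsub : ((⨆ i, F i).verts)ᶜ ⊆ ((L \ S) ∪ Set.range x) \ T := by
    intro u hu
    rw [Set.mem_compl_iff, hverts, Set.mem_iUnion] at hu
    push_neg at hu
    have huS : u ∉ S := by
      intro huS
      refine hu (Sum.inl ⟨u, huS⟩) ?_
      simp only [hF, Sum.elim_inl]
      rw [hgv]
      exact Or.inl rfl
    have huT : u ∉ T := by
      intro huT
      refine hu (Sum.inl (e.symm ⟨u, huT⟩)) ?_
      simp only [hF, Sum.elim_inl]
      rw [hgv]
      right
      rw [Equiv.apply_symm_apply]
      rfl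
    refine ⟨?_, huT⟩
    by_cases hkc : G.connectedComponentMk u = CL
    · exact Or.inl ⟨by rw [hCL, ConnectedComponent.mem_supp_iff]; exact hkc, huS⟩
    · have := hu (Sum.inr ⟨_, hkc⟩)
      simp only [hF, Sum.elim_inr] at this
      rw [hfv] at this
      simp only [Set.mem_diff, Set.mem_singleton_iff, not_and, not_not] at this
      exact Or.inr ⟨⟨_, hkc⟩, (this ConnectedComponent.connectedComponentMk_mem).symm⟩
  have hLS : (L \ S).ncard = κ + 1 := by
    rw [Set.ncard_diff hSL (Set.toFinite _), hLcard, hScard]; omega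
  have hrange : (Set.range x).ncard ≤ Nat.card ι2 := by
    calc (Set.range x).ncard = (x '' Set.univ).ncard := by rw [Set.image_univ]
      _ ≤ (Set.univ : Set ι2).ncard := Set.ncard_image_le (Set.toFinite _)
      _ = Nat.card ι2 := Set.ncard_univ _
  have n1 : ((⨆ i, F i).verts)ᶜ.ncard ≤ (((L \ S) ∪ Set.range x) \ T).ncard :=
    Set.ncard_le_ncard hsub (Set.toFinite _)
  have n2 : (((L \ S) ∪ Set.range x) \ T).ncard + T.ncard = ((L \ S) ∪ Set.range x).ncard :=
    Set.ncard_diff_add_ncard_of_subset hTsub (Set.toFinite _)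
  have n3 : ((L \ S) ∪ Set.range x).ncard ≤ (L \ S).ncard + (Set.range x).ncard :=
    Set.ncard_union_le _ _
  exact ⟨⨆ i, F i, hMatch, hvnot, by omega⟩


open SimpleGraph Set

variable [Fintype V] {G : SimpleGraph V} {L S K : Set V} {κ : ℕ}

lemma two_mul_mn (hG : DComplete G) :
    2 * matchingNumber G + Nat.card G.ConnectedComponent = Nat.card V := by
  obtain ⟨M, hM, hMcard⟩ := exists_maximum G
  have hcount := counting hM ∅ (compSets G) (compSets_pairwise G) (compSets_cover G)
      (fun Q hQ => by obtain ⟨c, rfl⟩ := hQ; exact (hG c).2)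
      (fun u w hadj _ Q hQ hu => compSets_closed G hadj Q hQ hu)
  simp only [Set.empty_diff, Set.ncard_empty, compSets_ncard] at hcount
  have h1 := verts_ncard_eq_two_mul hM
  have h2 := Set.ncard_add_ncard_compl M.verts (Set.toFinite _) (Set.toFinite _)
  obtain ⟨M₀, hM₀, hM₀c⟩ := constructG hG
  have h3 := verts_ncard_eq_two_mul hM₀
  have h4 := Set.ncard_add_ncard_compl M₀.verts (Set.toFinite _) (Set.toFinite _)
  have h5 := le_matchingNumber hM₀
  rw [hMcard] at h1
  omega

variable (hG : DComplete G) (hL : L ∈ compSets G)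
    (hSL : S ⊆ L) (hLcard : L.ncard = 2 * κ + 1) (hScard : S.ncard = κ)
    (hKS : Disjoint K S) (hKcard : κ < K.ncard)
    (hKscat : ∀ u ∈ K, ∀ v ∈ K, u ≠ v → ¬ G.Reachable u v)

include hG hL hSL hLcard hScard hKS hKcard hKscat

lemma two_mul_mn_gp :
    2 * matchingNumber (Gp G L S K) + Nat.card G.ConnectedComponent = Nat.card V := by
  obtain ⟨M, hM, hMcard⟩ := exists_maximum (Gp G L S K)
  have hcount := counting hM S (Qp G L S) (Qp_pairwise hL hSL) (Qp_cover hL hSL)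
      (Qp_odd hG) (fun u w hadj hw Q hQ hu => Qp_closed hL hSL u w hadj hw Q hQ hu)
  rw [Qp_ncard hL hSL hLcard hScard, hScard] at hcount
  have h1 := verts_ncard_eq_two_mul hM
  have h2 := Set.ncard_add_ncard_compl M.verts (Set.toFinite _) (Set.toFinite _)
  -- lower bound : some vertex outside S exists
  have hLSne : (L \ S).Nonempty := by
    have : (L \ S).ncard = κ + 1 := by
      rw [Set.ncard_diff hSL (Set.toFinite _), hLcard, hScard]; omega
    exact Set.nonempty_of_ncard_ne_zero (by omega)
  obtain ⟨v, hvL⟩ := hLSne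
  obtain ⟨M₀, hM₀, _, hM₀c⟩ := constructGp hG hL hSL hLcard hScard hKS hKcard hKscat v hvL.2
  have h3 := verts_ncard_eq_two_mul hM₀
  have h4 := Set.ncard_add_ncard_compl M₀.verts (Set.toFinite _) (Set.toFinite _)
  have h5 := le_matchingNumber hM₀
  rw [hMcard] at h1
  omega

lemma inessential_gp (v : V) (hv : v ∉ S) : ¬ Essential (Gp G L S K) v := by
  intro hess
  obtain ⟨M₀, hM₀, hvnot, hM₀c⟩ :=
    constructGp hG hL hSL hLcard hScard hKS hKcard hKscat v hv
  have h3 := verts_ncard_eq_two_mul hM₀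
  have h4 := Set.ncard_add_ncard_compl M₀.verts (Set.toFinite _) (Set.toFinite _)
  have h5 := le_matchingNumber hM₀
  have h6 := two_mul_mn_gp hG hL hSL hLcard hScard hKS hKcard hKscat
  have hmax : IsMaximumMatching (Gp G L S K) M₀ :=
    isMaximum_of_card_eq hM₀ (by omega)
  exact hvnot (hess M₀ hmax)

lemma essential_gp (s : V) (hs : s ∈ S) : Essential (Gp G L S K) s := by
  intro M hMmax
  by_contra hsnot
  have hM := hMmax.1
  have hMcard := IsMaximumMatching.card_eq hMmax
  have hcount := counting hM S (Qp G L S) (Qp_pairwise hL hSL) (Qp_cover hL hSL)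
      (Qp_odd hG) (fun u w hadj hw Q hQ hu => Qp_closed hL hSL u w hadj hw Q hQ hu)
  rw [Qp_ncard hL hSL hLcard hScard, hScard] at hcount
  have hSdiff : 1 ≤ (S \ M.verts).ncard := by
    rw [Nat.one_le_iff_ne_zero]
    intro h
    have := (Set.ncard_eq_zero (Set.toFinite _)).mp h
    rw [Set.diff_eq_empty] at this
    exact hsnot (this hs)
  have h1 := verts_ncard_eq_two_mul hM
  have h2 := Set.ncard_add_ncard_compl M.verts (Set.toFinite _) (Set.toFinite _)
  rw [hMcard] at h1
  have h6 := two_mul_mn_gp hG hL hSL hLcard hScard hKS hKcard hKscat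
  omega

lemma geD_gp : geD (Gp G L S K) = Sᶜ := by
  ext v
  simp only [geD, Set.mem_setOf_eq, Set.mem_compl_iff]
  constructor
  · intro h hvS
    exact h (essential_gp hG hL hSL hLcard hScard hKS hKcard hKscat v hvS)
  · intro hv
    exact inessential_gp hG hL hSL hLcard hScard hKS hKcard hKscat v hv

lemma geA_gp : geA (Gp G L S K) = S := by
  have hD := geD_gp hG hL hSL hLcard hScard hKS hKcard hKscat
  ext v
  simp only [geA, Set.mem_setOf_eq, hD, Set.mem_compl_iff, not_not]
  constructor
  · exact fun h => h.1
  · intro hvS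
    refine ⟨hvS, ?_⟩
    obtain ⟨k, hk⟩ : K.Nonempty := Set.nonempty_of_ncard_ne_zero (by omega)
    exact ⟨k, Set.disjoint_left.mp hKS hk, gp_adj_SK hvS hk hKS⟩

lemma geC_gp : geC (Gp G L S K) = ∅ := by
  have hD := geD_gp hG hL hSL hLcard hScard hKS hKcard hKscat
  have hA := geA_gp hG hL hSL hLcard hScard hKS hKcard hKscat
  ext v
  simp only [geC, Set.mem_setOf_eq, hD, hA, Set.mem_empty_iff_false, iff_false, not_and,
    Set.mem_compl_iff, not_not]
  exact fun h => h

lemma mn_eq : matchingNumber (Gp G L S K) = matchingNumber G := by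
  have h1 := two_mul_mn_gp hG hL hSL hLcard hScard hKS hKcard hKscat
  have h2 := two_mul_mn hG
  omega

lemma componentSets_gp :
    componentSets (Gp G L S K) Sᶜ
      = (compSets G \ {L}) ∪ ((fun v => ({v} : Set V)) '' (L \ S)) := by
  exact componentSets_eq (Qp_pairwise hL hSL) (Qp_cover hL hSL) (Qp_nonempty hG)
    (Qp_clique hG hL) (fun u w hadj hw Q hQ hu => Qp_closed hL hSL u w hadj hw Q hQ hu)



end Aux

/-- `D`-isolation: let `G` be a disjoint union of odd cliques, `L` a
component of size `2κ+1` (`κ ≥ 1`), `S ⊆ L` with `|S| = κ`, and `K ⊆ V∖S` scattered with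
`|K| > κ`. Deleting all edges inside `L` and joining `S` to itself and to `K` yields a
graph `G'` with `GE(G') = (∅, S, V∖S)`, `ν(G') = ν(G)`, whose components on `V∖S` are
those of `G` other than `L` together with the `κ+1` isolated vertices of `L∖S`. -/
theorem D_isolation [Fintype V] (G : SimpleGraph V) (hG : DComplete G)
    (L S K : Set V) (κ : ℕ) (hκ : 1 ≤ κ)
    (hL : L ∈ compSets G) (hLcard : L.ncard = 2 * κ + 1)
    (hSL : S ⊆ L) (hScard : S.ncard = κ)
    (hKS : Disjoint K S) (hKcard : κ < K.ncard)
    (hKscat : ∀ u ∈ K, ∀ v ∈ K, u ≠ v → ¬ G.Reachable u v) :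
    geC (SimpleGraph.fromRel (fun u v =>
        (G.Adj u v ∧ ¬(u ∈ L ∧ v ∈ L)) ∨ (u ∈ S ∧ v ∈ S) ∨ (u ∈ S ∧ v ∈ K))) = ∅ ∧
    geA (SimpleGraph.fromRel (fun u v =>
        (G.Adj u v ∧ ¬(u ∈ L ∧ v ∈ L)) ∨ (u ∈ S ∧ v ∈ S) ∨ (u ∈ S ∧ v ∈ K))) = S ∧
    geD (SimpleGraph.fromRel (fun u v =>
        (G.Adj u v ∧ ¬(u ∈ L ∧ v ∈ L)) ∨ (u ∈ S ∧ v ∈ S) ∨ (u ∈ S ∧ v ∈ K))) = Sᶜ ∧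
    matchingNumber (SimpleGraph.fromRel (fun u v =>
        (G.Adj u v ∧ ¬(u ∈ L ∧ v ∈ L)) ∨ (u ∈ S ∧ v ∈ S) ∨ (u ∈ S ∧ v ∈ K)))
      = matchingNumber G ∧
    componentSets (SimpleGraph.fromRel (fun u v =>
        (G.Adj u v ∧ ¬(u ∈ L ∧ v ∈ L)) ∨ (u ∈ S ∧ v ∈ S) ∨ (u ∈ S ∧ v ∈ K))) Sᶜ
      = (compSets G \ {L}) ∪ ((fun v => ({v} : Set V)) '' (L \ S)) := by
  exact ⟨geC_gp hG hL hSL hLcard hScard hKS hKcard hKscat,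
    geA_gp hG hL hSL hLcard hScard hKS hKcard hKscat,
    geD_gp hG hL hSL hLcard hScard hKS hKcard hKscat,
    mn_eq hG hL hSL hLcard hScard hKS hKcard hKscat,
    componentSets_gp hG hL hSL hLcard hScard hKS hKcard hKscat⟩

end GRT
end
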